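/- arXiv:1103.4259 — 2 statements merged into one kernel-verified Lean document; each statement's English description precedes it below -/
import Mathlib

section
/- The forcing notion ℙ of conditions (n_p, D_p, F_p), where n_p ∈ ω, D_p is a finite subset of ω₁, and F_p is a finite subset of Fn_{<ω}(n_p, D_p) containing all singletons, has precaliber ω₁: every uncountable family of conditions contains an uncountable subfamily in which every finite subset has a common lower bound. In particular ℙ is ccc. -/
open Ordinal Cardinal

/-- A condition in the forcing `ℙ`: `n ∈ ω`, `D` a finite subset of `ω₁`, and `F` a finite
set of (graphs of) partial functions from `{0,…,n-1}` to `D`, containing all singletons. -/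
structure PCond where
  n : ℕ
  D : Finset Ordinal
  F : Finset (Finset (ℕ × Ordinal))
  hD : ∀ ξ ∈ D, ξ < (Cardinal.aleph 1).ord
  hdom : ∀ f ∈ F, ∀ x ∈ f, x.1 < n ∧ x.2 ∈ D
  hfun : ∀ f ∈ F, ∀ x ∈ f, ∀ y ∈ f, x.1 = y.1 → x.2 = y.2
  hsing : ∀ i < n, ∀ ξ ∈ D, ({(i, ξ)} : Finset (ℕ × Ordinal)) ∈ F

/-- The ordering on `ℙ`: `p ≤ q` iff `n_p ≥ n_q`, `D_p ⊇ D_q`, `F_p ⊇ F_q`, and every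
`f ∈ F_p` has some `g ∈ F_q` with `graph(f) ∩ (n_q × D_q) ⊆ graph(g)`. -/
def PLe (p q : PCond) : Prop :=
  q.n ≤ p.n ∧ q.D ⊆ p.D ∧ q.F ⊆ p.F ∧
    ∀ f ∈ p.F, ∃ g ∈ q.F, ∀ x ∈ f, x.1 < q.n → x.2 ∈ q.D → x ∈ g

/-- `p₁` and `p₂` are isomorphic conditions: same `n`, and an order-preserving bijection
`e : D₁ → D₂` fixing `D₁ ∩ D₂` pointwise, with `f ∈ F₁ ↔ e[f] ∈ F₂`. -/
def PIso (p₁ p₂ : PCond) : Prop :=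
  p₁.n = p₂.n ∧ ∃ e : Ordinal → Ordinal,
    Set.BijOn e ↑p₁.D ↑p₂.D ∧
    (∀ ξ ∈ p₁.D, ∀ η ∈ p₁.D, (ξ ≤ η ↔ e ξ ≤ e η)) ∧
    (∀ ξ ∈ p₁.D ∩ p₂.D, e ξ = ξ) ∧
    (∀ f : Finset (ℕ × Ordinal), (∀ x ∈ f, x.2 ∈ p₁.D) →
      (f ∈ p₁.F ↔ f.image (fun x => (x.1, e x.2)) ∈ p₂.F))

lemma Set.exists_not_countable_fiber {α β : Type*} [Countable β] {S : Set α}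
    (hS : ¬S.Countable) (f : α → β) : ∃ b, ¬{a ∈ S | f a = b}.Countable := by
  by_contra! h
  exact hS <| (Set.countable_iUnion h).mono fun a ha =>
    Set.mem_iUnion.2 ⟨f a, (⟨ha, rfl⟩ : a ∈ S ∧ f a = f a)⟩

section DeltaSystem

variable {ι α : Type*}

/-- A maximal pairwise disjoint subfamily meets every member, so when each point lies in only
countably many members, a countable maximal subfamily would leave only countably many members. -/
lemma exists_not_countable_pairwiseDisjoint (A : ι → Finset α) {S : Set ι} (hS : ¬S.Countable)
    (hA : ∀ a, {i ∈ S | a ∈ A i}.Countable) :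
    ∃ T ⊆ S, ¬T.Countable ∧ T.PairwiseDisjoint A := by
  obtain ⟨T, hT⟩ := zorn_subset {T | T ⊆ S ∧ T.PairwiseDisjoint A} fun c hcS hc =>
    ⟨⋃₀ c, ⟨Set.sUnion_subset fun T hT => (hcS hT).1,
      (Set.pairwiseDisjoint_sUnion hc.directedOn).2 fun T hT => (hcS hT).2⟩,
      fun _ => Set.subset_sUnion_of_mem⟩
  refine ⟨T, hT.prop.1, fun hTc => hS ?_, hT.prop.2⟩
  have hmeets : ∀ i ∈ S, i ∉ T → ∃ j ∈ T, ∃ a, a ∈ A j ∧ a ∈ A i := by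
    intro i hi hiT
    by_contra! h
    exact hiT <| hT.mem_of_prop_insert ⟨Set.insert_subset hi hT.prop.1,
      hT.prop.2.insert fun j hj _ => Finset.disjoint_left.2 fun a hai haj => h j hj a haj hai⟩
  refine (hTc.union <| (hTc.biUnion fun j _ => (A j).countable_toSet).biUnion
    fun a _ => hA a).mono fun i hi => ?_
  by_cases hiT : i ∈ T
  · exact Or.inl hiT
  · obtain ⟨j, hj, a, haj, hai⟩ := hmeets i hi hiT
    exact Or.inr <| Set.mem_biUnion (Set.mem_biUnion hj haj) ⟨hi, hai⟩

variable [DecidableEq α]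

/-- The Δ-system lemma, for indexed families: `A` need not be injective on `S`. -/
theorem exists_not_countable_deltaSystem (A : ι → Finset α) :
    ∀ (d : ℕ) {S : Set ι}, ¬S.Countable → (∀ i ∈ S, (A i).card ≤ d) →
      ∃ R : Finset α, ∃ T ⊆ S, ¬T.Countable ∧ T.Pairwise fun i j => A i ∩ A j = R
  | 0, S, hS, hd => ⟨∅, S, subset_rfl, hS, fun i hi j _ _ => by
      simp [Finset.card_eq_zero.1 (Nat.le_zero.1 (hd i hi))]⟩
  | d + 1, S, hS, hd => by
    by_cases hA : ∃ a, ¬{i ∈ S | a ∈ A i}.Countable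
    · obtain ⟨a, ha⟩ := hA
      obtain ⟨R, T, hTS, hT, hR⟩ := exists_not_countable_deltaSystem (fun i => (A i).erase a) d ha
        fun i hi => by rw [Finset.card_erase_of_mem hi.2]; exact Nat.sub_le_of_le_add (hd i hi.1)
      refine ⟨insert a R, T, fun i hi => (hTS hi).1, hT, fun i hi j hj hij => ?_⟩
      rw [← hR hi hj hij, Finset.erase_inter, Finset.inter_erase, Finset.erase_idem,
        Finset.insert_erase (Finset.mem_inter.2 ⟨(hTS hi).2, (hTS hj).2⟩)]
    · push Not at hA
      obtain ⟨T, hTS, hT, hdisj⟩ := exists_not_countable_pairwiseDisjoint A hS hA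
      exact ⟨∅, T, hTS, hT, fun i hi j hj hij =>
        Finset.disjoint_iff_inter_eq_empty.1 (hdisj hi hj hij)⟩

end DeltaSystem

def HasPrecaliberAleph₁ {α : Type*} (le : α → α → Prop) : Prop :=
  ∀ S : Set α, ¬S.Countable →
    ∃ T ⊆ S, ¬T.Countable ∧ ∀ F : Finset α, ↑F ⊆ T → ∃ p, ∀ q ∈ F, le p q

theorem HasPrecaliberAleph₁.countable_of_pairwise_incompatible {α : Type*} {le : α → α → Prop}
    (h : HasPrecaliberAleph₁ le) (A : Set α)
    (hA : ∀ a ∈ A, ∀ b ∈ A, a ≠ b → ¬∃ c, le c a ∧ le c b) : A.Countable := by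
  classical
  by_contra hA'
  obtain ⟨T, hTA, hT, hbdd⟩ := h A hA'
  obtain ⟨a, ha, b, hb, hab⟩ := Set.not_subsingleton_iff.1 fun h => hT h.countable
  obtain ⟨c, hc⟩ := hbdd {a, b} (by simp [Set.insert_subset_iff, ha, hb])
  exact hA a (hTA ha) b (hTA hb) hab ⟨c, hc a (by simp), hc b (by simp)⟩

namespace Finset

variable {α : Type*} [LinearOrder α]

def rank (D : Finset α) (a : α) : ℕ := #{b ∈ D | b < a}

lemma rank_strictMonoOn (D : Finset α) : StrictMonoOn D.rank D := by
  intro a ha b _ hab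
  refine card_lt_card <| (ssubset_iff_of_subset fun x hx => ?_).2 ⟨a, ?_, ?_⟩
  · simp only [mem_filter] at hx ⊢
    exact ⟨hx.1, hx.2.trans hab⟩
  · exact mem_filter.2 ⟨ha, hab⟩
  · simp

end Finset

namespace PCond

/-- The last clause of `PLe p q`. -/
def Traces (p q : PCond) : Prop :=
  ∀ f ∈ p.F, ∃ g ∈ q.F, ∀ x ∈ f, x.1 < q.n → x.2 ∈ q.D → x ∈ g

/-- The isomorphism type of `F_p`: every ordinal is replaced by its position in `D_p`. -/
noncomputable def pattern (p : PCond) : Finset (Finset (ℕ × ℕ)) :=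
  p.F.image (Finset.image (Prod.map id p.D.rank))

lemma traces_of_pattern_eq {p q : PCond} (hpat : p.pattern = q.pattern)
    (hrank : ∀ ξ ∈ p.D ∩ q.D, p.D.rank ξ = q.D.rank ξ) : p.Traces q := by
  intro f hf
  obtain ⟨g, hg, hgf⟩ := Finset.mem_image.1 (hpat ▸ Finset.mem_image_of_mem _ hf :
    f.image (Prod.map id p.D.rank) ∈ q.pattern)
  refine ⟨g, hg, fun x hx _ hxq => ?_⟩
  obtain ⟨y, hy, hyx⟩ := Finset.mem_image.1 (hgf ▸ Finset.mem_image_of_mem _ hx)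
  obtain ⟨h₁, h₂⟩ := Prod.ext_iff.1 hyx
  have h₂ : y.2 = x.2 := q.D.rank_strictMonoOn.injOn (q.hdom g hg y hy).2 hxq
    (h₂.trans (hrank _ (Finset.mem_inter.2 ⟨(p.hdom f hf x hx).2, hxq⟩)))
  exact (Prod.ext h₁ h₂ : y = x) ▸ hy

noncomputable def amalgam (P : Finset PCond) : PCond where
  n := P.sup PCond.n
  D := P.sup PCond.D
  F := P.sup PCond.F ∪ (Finset.range (P.sup PCond.n) ×ˢ P.sup PCond.D).image singleton
  hD ξ hξ := by
    obtain ⟨q, -, hξq⟩ := Finset.mem_sup.1 hξ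
    exact q.hD ξ hξq
  hdom f hf x hx := by
    rcases Finset.mem_union.1 hf with hf | hf
    · obtain ⟨q, hq, hfq⟩ := Finset.mem_sup.1 hf
      obtain ⟨h₁, h₂⟩ := q.hdom f hfq x hx
      exact ⟨h₁.trans_le (Finset.le_sup (f := PCond.n) hq), Finset.le_sup (f := PCond.D) hq h₂⟩
    · obtain ⟨y, hy, rfl⟩ := Finset.mem_image.1 hf
      obtain ⟨h₁, h₂⟩ := Finset.mem_product.1 (Finset.mem_singleton.1 hx ▸ hy)
      exact ⟨Finset.mem_range.1 h₁, h₂⟩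
  hfun f hf x hx y hy hxy := by
    rcases Finset.mem_union.1 hf with hf | hf
    · obtain ⟨q, -, hfq⟩ := Finset.mem_sup.1 hf
      exact q.hfun f hfq x hx y hy hxy
    · obtain ⟨z, -, rfl⟩ := Finset.mem_image.1 hf
      rw [Finset.mem_singleton.1 hx, Finset.mem_singleton.1 hy]
  hsing i hi ξ hξ := Finset.mem_union_right _
    (Finset.mem_image_of_mem _ (Finset.mem_product.2 ⟨Finset.mem_range.2 hi, hξ⟩))

lemma amalgam_pLe {P : Finset PCond} {q : PCond} (hq : q ∈ P) (hn : ∀ r ∈ P, r.n = q.n)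
    (hcard : ∀ r ∈ P, r.D.card = q.D.card) (htr : ∀ r ∈ P, r.Traces q) : PLe (amalgam P) q := by
  refine ⟨Finset.le_sup (f := PCond.n) hq, Finset.le_sup (f := PCond.D) hq,
    fun f hf => Finset.mem_union_left _ (Finset.mem_sup.2 ⟨q, hq, hf⟩), fun f hf => ?_⟩
  rcases Finset.mem_union.1 hf with hf | hf
  · obtain ⟨r, hr, hfr⟩ := Finset.mem_sup.1 hf
    exact htr r hr f hfr
  obtain ⟨⟨i, ξ⟩, hiξ, rfl⟩ := Finset.mem_image.1 hf
  obtain ⟨hi, hξ⟩ := Finset.mem_product.1 hiξ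
  have hi : i < q.n := (Finset.mem_range.1 hi).trans_le (Finset.sup_le fun r hr => (hn r hr).le)
  by_cases hξq : ξ ∈ q.D
  · exact ⟨_, q.hsing i hi ξ hξq, fun x hx _ _ => hx⟩
  -- the trace of `{(i, ξ)}` on `n_q × D_q` is empty, so any member of `F_q` covers it
  obtain ⟨r, hr, hξr⟩ := Finset.mem_sup.1 hξ
  obtain ⟨η, hη⟩ : q.D.Nonempty := by
    rw [← Finset.card_pos, ← hcard r hr]
    exact Finset.card_pos.2 ⟨ξ, hξr⟩
  refine ⟨_, q.hsing i hi η hη, fun x hx _ hxq => ?_⟩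
  rw [Finset.mem_singleton.1 hx] at hxq
  exact absurd hxq hξq

end PCond

/-- Pigeonhole on `n_p`, `|D_p|` and the pattern, then a Δ-system with root `R`, then pigeonhole
on the positions of the points of `R`: in the resulting family any two conditions are isomorphic
over their common part, so each one covers the traces of all the others. -/
theorem hasPrecaliberAleph₁_pLe : HasPrecaliberAleph₁ PLe := by
  intro S hS
  obtain ⟨⟨n, d, pat⟩, hS₁⟩ :=
    Set.exists_not_countable_fiber hS fun p : PCond => (p.n, p.D.card, p.pattern)
  obtain ⟨R, S₂, hS₂, hS₂c, hR⟩ := exists_not_countable_deltaSystem PCond.D d hS₁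
    fun p hp => (congrArg (·.2.1) hp.2).le
  obtain ⟨ρ, hT⟩ := Set.exists_not_countable_fiber hS₂c fun (p : PCond) (ξ : R) => p.D.rank ξ
  set T := {p ∈ S₂ | (fun ξ : R => p.D.rank ξ) = ρ}
  have htype : ∀ p ∈ T, p.n = n ∧ p.D.card = d ∧ p.pattern = pat :=
    fun p hp => by simpa using (hS₂ hp.1).2
  have hrank : ∀ p ∈ T, ∀ q ∈ T, ∀ ξ ∈ p.D ∩ q.D, p.D.rank ξ = q.D.rank ξ := by
    intro p hp q hq ξ hξ
    rcases eq_or_ne p q with rfl | hpq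
    · rfl
    · exact congrFun (hp.2.trans hq.2.symm) ⟨ξ, hR hp.1 hq.1 hpq ▸ hξ⟩
  refine ⟨T, fun p hp => (hS₂ hp.1).1, hT, fun P hP => ⟨PCond.amalgam P, fun q hq => ?_⟩⟩
  refine PCond.amalgam_pLe hq (fun r hr => ?_) (fun r hr => ?_) fun r hr => ?_
  · rw [(htype r (hP hr)).1, (htype q (hP hq)).1]
  · rw [(htype r (hP hr)).2.1, (htype q (hP hq)).2.1]
  · exact PCond.traces_of_pattern_eq ((htype r (hP hr)).2.2.trans (htype q (hP hq)).2.2.symm)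
      (hrank r (hP hr) q (hP hq))

/-- `ℙ` has precaliber `ω₁`: every uncountable family of conditions contains an uncountable
subfamily every finite subset of which has a common lower bound; in particular `ℙ` is ccc. -/
theorem stmt_9 :
    (∀ S : Set PCond, ¬ S.Countable →
      ∃ T ⊆ S, ¬ T.Countable ∧
        ∀ F : Finset PCond, ↑F ⊆ T → ∃ p : PCond, ∀ q ∈ F, PLe p q) ∧
    (∀ A : Set PCond,
      (∀ a ∈ A, ∀ b ∈ A, a ≠ b → ¬ ∃ c : PCond, PLe c a ∧ PLe c b) → A.Countable) :=
  ⟨hasPrecaliberAleph₁_pLe, hasPrecaliberAleph₁_pLe.countable_of_pairwise_incompatible⟩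
end

section
/- Let q_k = (D_k, F_k), 1 ≤ k ≤ m, be pairwise isomorphic conditions in ℚ such that (D_k)_{1≤k≤m} is a Δ-system with countable root D. Then q = (D₁ ∪ ⋯ ∪ D_m, F₁ ∪ ⋯ ∪ F_m) is a condition in ℚ and q ≤ q_k for every 1 ≤ k ≤ m. -/
open Ordinal Cardinal

/-- A condition in the forcing `ℚ`: `D` a countable subset of `ω₂` and `F` a countable set
of (graphs of) partial functions from `ω` to `D`, containing all singletons. -/
structure QCond where
  D : Set Ordinal
  F : Set (Set (ℕ × Ordinal))
  hDc : D.Countable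
  hD : ∀ ξ ∈ D, ξ < (Cardinal.aleph 2).ord
  hFc : F.Countable
  hdom : ∀ f ∈ F, ∀ x ∈ f, x.2 ∈ D
  hfun : ∀ f ∈ F, ∀ x ∈ f, ∀ y ∈ f, x.1 = y.1 → x.2 = y.2
  hsing : ∀ i : ℕ, ∀ ξ ∈ D, ({(i, ξ)} : Set (ℕ × Ordinal)) ∈ F

/-- The ordering on `ℚ`: `p ≤ q` iff `D_p ⊇ D_q`, `F_p ⊇ F_q`, and every `f ∈ F_p` has some
`g ∈ F_q` with `graph(f) ∩ (ω × D_q) ⊆ graph(g)`. -/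
def QLe (p q : QCond) : Prop :=
  q.D ⊆ p.D ∧ q.F ⊆ p.F ∧
    ∀ f ∈ p.F, ∃ g ∈ q.F, ∀ x ∈ f, x.2 ∈ q.D → x ∈ g

/-- `q₁` and `q₂` are isomorphic conditions: an order-preserving bijection `e : D₁ → D₂`
fixing `D₁ ∩ D₂` pointwise, with `f ∈ F₁ ↔ e[f] ∈ F₂`. -/
def QIso (q₁ q₂ : QCond) : Prop :=
  ∃ e : Ordinal → Ordinal,
    Set.BijOn e q₁.D q₂.D ∧
    (∀ ξ ∈ q₁.D, ∀ η ∈ q₁.D, (ξ ≤ η ↔ e ξ ≤ e η)) ∧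
    (∀ ξ ∈ q₁.D ∩ q₂.D, e ξ = ξ) ∧
    (∀ f : Set (ℕ × Ordinal), (∀ x ∈ f, x.2 ∈ q₁.D) →
      (f ∈ q₁.F ↔ (fun x : ℕ × Ordinal => (x.1, e x.2)) '' f ∈ q₂.F))

def QCond.iUnion {ι : Type*} [Countable ι] (q : ι → QCond) : QCond where
  D := ⋃ k, (q k).D
  F := ⋃ k, (q k).F
  hDc := Set.countable_iUnion fun k => (q k).hDc
  hD ξ hξ := by
    obtain ⟨k, hk⟩ := Set.mem_iUnion.1 hξ
    exact (q k).hD ξ hk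
  hFc := Set.countable_iUnion fun k => (q k).hFc
  hdom f hf x hx := by
    obtain ⟨k, hk⟩ := Set.mem_iUnion.1 hf
    exact Set.mem_iUnion.2 ⟨k, (q k).hdom f hk x hx⟩
  hfun f hf := by
    obtain ⟨k, hk⟩ := Set.mem_iUnion.1 hf
    exact (q k).hfun f hk
  hsing i ξ hξ := by
    obtain ⟨k, hk⟩ := Set.mem_iUnion.1 hξ
    exact Set.mem_iUnion.2 ⟨k, (q k).hsing i ξ hk⟩

-- The witness is the image of `f`, which agrees with `f` on `D_q` since `e` fixes `D_p ∩ D_q`.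
theorem QIso.exists_mem_superset_restrict {p q : QCond} (h : QIso p q) {f : Set (ℕ × Ordinal)}
    (hf : f ∈ p.F) : ∃ g ∈ q.F, ∀ x ∈ f, x.2 ∈ q.D → x ∈ g := by
  obtain ⟨e, -, -, hfix, hF⟩ := h
  have hdom : ∀ x ∈ f, x.2 ∈ p.D := p.hdom f hf
  refine ⟨(fun x : ℕ × Ordinal => (x.1, e x.2)) '' f, (hF f hdom).1 hf, fun x hx hxq => ?_⟩
  exact ⟨x, hx, by simp only [hfix x.2 ⟨hdom x hx, hxq⟩]⟩

theorem QCond.iUnion_le {ι : Type*} [Countable ι] (q : ι → QCond) (k : ι)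
    (hiso : ∀ j, QIso (q j) (q k)) : QLe (QCond.iUnion q) (q k) := by
  refine ⟨Set.subset_iUnion (fun k => (q k).D) k, Set.subset_iUnion (fun k => (q k).F) k, ?_⟩
  intro f hf
  obtain ⟨j, hj⟩ := Set.mem_iUnion.1 hf
  exact (hiso j).exists_mem_superset_restrict hj

theorem stmt_12_general (m : ℕ) (q : Fin m → QCond)
    (hiso : ∀ k k', QIso (q k) (q k')) :
    ∃ Q : QCond, Q.D = ⋃ k, (q k).D ∧ Q.F = ⋃ k, (q k).F ∧ ∀ k, QLe Q (q k) :=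
  ⟨QCond.iUnion q, rfl, rfl, fun k => QCond.iUnion_le q k fun j => hiso j k⟩

/-- Amalgamation in `ℚ`: pairwise isomorphic conditions whose domains form a Δ-system with
countable root `D` have the coordinatewise union as a common lower bound. -/
theorem stmt_12 (m : ℕ) (hm : 1 ≤ m) (q : Fin m → QCond)
    (hiso : ∀ k k', QIso (q k) (q k'))
    (D : Set Ordinal) (hDc : D.Countable)
    (hΔ : ∀ k k', k ≠ k' → (q k).D ∩ (q k').D = D) :
    ∃ Q : QCond, Q.D = ⋃ k, (q k).D ∧ Q.F = ⋃ k, (q k).F ∧ ∀ k, QLe Q (q k) :=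
  stmt_12_general m q hiso
end
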